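/- For every real x, the free T density converges pointwise to the standard Cauchy density as the parameter tends to 1 from above: lim_{m→1⁺} f_{fT}(x;m) = 1/(π(1+x²)). -/

import Mathlib

open MeasureTheory Real Filter

/-- Density of the free T-distribution of parameter `m`. -/
noncomputable def fTDensity (m : ℝ) : ℝ → ℝ :=
  Set.indicator (Set.Icc (-(2 * m / (m - 1))) (2 * m / (m - 1)))
    (fun x => Real.sqrt (4 - ((m - 1) / m) ^ 2 * x ^ 2) / (2 * π * (1 + x ^ 2 / m)))

theorem fT_tendsto_cauchy (x : ℝ) :
    Tendsto (fun m : ℝ => fTDensity m x) (nhdsWithin 1 (Set.Ioi 1))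
      (nhds (1 / (π * (1 + x ^ 2)))) := by
  have hπ : (0:ℝ) < π := Real.pi_pos
  have h1x : (0:ℝ) < 1 + x ^ 2 := by positivity
  have hcont : ContinuousAt
      (fun m : ℝ => Real.sqrt (4 - ((m - 1) / m) ^ 2 * x ^ 2) / (2 * π * (1 + x ^ 2 / m))) 1 := by
    apply ContinuousAt.div
    · exact Real.continuous_sqrt.continuousAt.comp <| by
        apply ContinuousAt.sub continuousAt_const
        exact (((continuousAt_id.sub continuousAt_const).div continuousAt_id
          (by norm_num)).pow 2).mul continuousAt_const
    · exact continuousAt_const.mul <| continuousAt_const.add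
        (continuousAt_const.div continuousAt_id (by norm_num))
    · have : (1:ℝ) + x ^ 2 / 1 = 1 + x ^ 2 := by ring
      rw [this]
      positivity
  have hlim : Tendsto
      (fun m : ℝ => Real.sqrt (4 - ((m - 1) / m) ^ 2 * x ^ 2) / (2 * π * (1 + x ^ 2 / m)))
      (nhdsWithin 1 (Set.Ioi 1)) (nhds (1 / (π * (1 + x ^ 2)))) := by
    have h := (hcont.continuousWithinAt (s := Set.Ioi 1)).tendsto
    have hval : Real.sqrt (4 - (((1:ℝ) - 1) / 1) ^ 2 * x ^ 2) / (2 * π * (1 + x ^ 2 / 1))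
        = 1 / (π * (1 + x ^ 2)) := by
      have h4 : Real.sqrt (4 - (((1:ℝ) - 1) / 1) ^ 2 * x ^ 2) = 2 := by
        norm_num
      rw [h4]
      field_simp
    rwa [hval] at h
  refine hlim.congr' ?_ |>.mono_left le_rfl
  · have hmem : Set.Ioo (1:ℝ) (1 + 2 / (|x| + 1)) ∈ nhdsWithin 1 (Set.Ioi 1) := by
      apply Ioo_mem_nhdsGT_of_mem
      constructor
      · exact le_refl _
      · have : 0 < 2 / (|x| + 1) := by positivity
        linarith
    filter_upwards [hmem] with m hm
    have hm1 : 1 < m := hm.1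
    have hm0 : 0 < m - 1 := by linarith
    have habs : |x| ≤ 2 * m / (m - 1) := by
      have h2 : (m - 1) * (|x| + 1) < 2 := by
        have := hm.2
        have hx1 : 0 < |x| + 1 := by positivity
        calc (m - 1) * (|x| + 1) < (2 / (|x| + 1)) * (|x| + 1) := by
              apply mul_lt_mul_of_pos_right _ hx1
              linarith
          _ = 2 := by field_simp
      rw [le_div_iff₀ hm0]
      nlinarith [abs_nonneg x]
    have hx : x ∈ Set.Icc (-(2 * m / (m - 1))) (2 * m / (m - 1)) := by
      rw [Set.mem_Icc]
      constructor
      · linarith [neg_abs_le x]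
      · linarith [le_abs_self x]
    symm
    exact Set.indicator_of_mem hx _
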